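/- arXiv:0905.4187 — 11 statements merged into one kernel-verified Lean document; each statement's English description precedes it below -/
import Mathlib

section
/- Let P_n be the Catalan-Larcombe-French numbers defined by P_0 = 1, P_1 = 8, and n^2 P_n = 8(3n^2 - 3n + 1) P_{n-1} - 128(n-1)^2 P_{n-2} for n ≥ 2. Then every P_n is a positive integer. -/
/-!
`P n = 2 ^ n * a n`, where `a n = ∑ k, C(n, k) C(2k, k) C(2(n - k), n - k)` is visibly a positive
integer. That `a` satisfies the recurrence of `P` with the factors 8 and 128 replaced by 4 and 32
is proved by creative telescoping: the recurrence operator applied to the summand is a difference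
`G(n, k + 1) - G(n, k)` of Zeilberger's certificate, which collapses on summation over `k`.
The certificate identity reduces, through the ratios of the summand in `n` and in `k`, to an
identity of rational functions. These ratio relations hold for every `k`, including `k > n`,
and their denominators `2n - 2k - 1` are odd, so no boundary cases arise.
-/

open Finset

def clfTerm (n k : ℕ) : ℕ := n.choose k * k.centralBinom * (n - k).centralBinom

def clf (n : ℕ) : ℕ := ∑ k ∈ range (n + 1), clfTerm n k

lemma clfTerm_eq_zero_of_lt {n k : ℕ} (h : n < k) : clfTerm n k = 0 := by
  simp [clfTerm, Nat.choose_eq_zero_of_lt h]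

lemma clfTerm_pos {n k : ℕ} (h : k ≤ n) : 0 < clfTerm n k :=
  Nat.mul_pos (Nat.mul_pos (Nat.choose_pos h) k.centralBinom_pos) (n - k).centralBinom_pos

lemma clf_pos (n : ℕ) : 0 < clf n :=
  sum_pos' (fun _ _ => Nat.zero_le _) ⟨0, by simp, clfTerm_pos n.zero_le⟩

lemma sum_range_clfTerm {n N : ℕ} (h : n < N) : ∑ k ∈ range N, clfTerm n k = clf n :=
  (sum_subset (range_subset_range.2 h) fun _ hN hn =>
    clfTerm_eq_zero_of_lt (by simp at hN hn; omega)).symm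

lemma two_mul_sub_sub_one_ne_zero (a b : ℕ) : 2 * ((a : ℚ) - b) - 1 ≠ 0 := by
  intro h
  have : 2 * ((a : ℤ) - b) - 1 = 0 := by exact_mod_cast h
  omega

lemma cast_succ_mul_centralBinom_succ (n : ℕ) :
    ((n : ℚ) + 1) * (n + 1).centralBinom = 2 * (2 * n + 1) * n.centralBinom := by
  exact_mod_cast n.succ_mul_centralBinom_succ

lemma clfTerm_succ_left (n k : ℕ) :
    ((n : ℚ) + 1 - k) ^ 2 * clfTerm (n + 1) k
      = 2 * (n + 1) * (2 * n - 2 * k + 1) * clfTerm n k := by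
  rcases le_or_gt k n with hk | hk
  · obtain ⟨j, rfl⟩ := Nat.exists_eq_add_of_le hk
    have hchoose : ((k + j + 1).choose k : ℚ) * (j + 1) = (k + j).choose k * (k + j + 1) := by
      have := Nat.choose_mul_succ_eq (k + j) k
      rw [show k + j + 1 - k = j + 1 by omega] at this
      exact_mod_cast this.symm
    simp only [clfTerm, show k + j + 1 - k = j + 1 by omega, Nat.add_sub_cancel_left]
    push_cast
    linear_combination ((j : ℚ) + 1) * k.centralBinom * (j + 1).centralBinom * hchoose
      + ((k + j).choose k : ℚ) * k.centralBinom * (k + j + 1) * cast_succ_mul_centralBinom_succ j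
  · rw [clfTerm_eq_zero_of_lt hk]
    rcases (Nat.succ_le_of_lt hk).eq_or_lt with rfl | hk'
    · push_cast; ring
    · rw [clfTerm_eq_zero_of_lt hk']; ring

lemma clfTerm_succ_right (n k : ℕ) :
    ((k : ℚ) + 1) ^ 2 * (2 * n - 2 * k - 1) * clfTerm n (k + 1)
      = ((n : ℚ) - k) ^ 2 * (2 * k + 1) * clfTerm n k := by
  rcases lt_or_ge k n with hk | hk
  · obtain ⟨j, rfl⟩ := Nat.exists_eq_add_of_lt hk
    have hchoose :
        ((k + j + 1).choose (k + 1) : ℚ) * (k + 1) = (k + j + 1).choose k * (j + 1) := by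
      have := Nat.choose_succ_right_eq (k + j + 1) k
      rw [show k + j + 1 - k = j + 1 by omega] at this
      exact_mod_cast this
    simp only [clfTerm, show k + j + 1 - k = j + 1 by omega,
      show k + j + 1 - (k + 1) = j by omega]
    push_cast
    linear_combination
      ((k : ℚ) + 1) * (2 * j + 1) * (k + 1).centralBinom * j.centralBinom * hchoose
      + (2 * (j : ℚ) + 1) * j.centralBinom * (k + j + 1).choose k * (j + 1) *
        cast_succ_mul_centralBinom_succ k
      - ((j : ℚ) + 1) * (2 * k + 1) * (k + j + 1).choose k * k.centralBinom *
        cast_succ_mul_centralBinom_succ j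
  · rw [clfTerm_eq_zero_of_lt (Nat.lt_succ_of_le hk)]
    rcases hk.eq_or_lt with rfl | hk'
    · ring
    · rw [clfTerm_eq_zero_of_lt hk']; ring

/-- The certificate found by Zeilberger's algorithm for the recurrence `clf_recurrence`. -/
def clfCert (n k : ℕ) : ℚ :=
  clfTerm n k * k ^ 2 * (2 * k * (n - 1) - n * (2 * n - 3)) / (n * (2 * n - 2 * k - 1))

lemma clfTerm_recurrence_eq_cert_sub (m k : ℕ) :
    ((m : ℚ) + 2) ^ 2 * clfTerm (m + 2) k
      - 4 * (3 * ((m : ℚ) + 2) ^ 2 - 3 * (m + 2) + 1) * clfTerm (m + 1) k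
      + 32 * ((m : ℚ) + 1) ^ 2 * clfTerm m k
      = clfCert (m + 2) (k + 1) - clfCert (m + 2) k := by
  have hA : (2 * ((m : ℚ) + 2 - k) - 1) ≠ 0 := by
    exact_mod_cast two_mul_sub_sub_one_ne_zero (m + 2) k
  have hB : (2 * ((m : ℚ) + 2 - (k + 1)) - 1) ≠ 0 := by
    exact_mod_cast two_mul_sub_sub_one_ne_zero (m + 2) (k + 1)
  have e₁ : (clfTerm (m + 1) k : ℚ)
      = ((m : ℚ) + 2 - k) ^ 2 * clfTerm (m + 2) k
        / (2 * (m + 2) * (2 * ((m : ℚ) + 2 - k) - 1)) := by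
    have h := clfTerm_succ_left (m + 1) k
    rw [show m + 1 + 1 = m + 2 from rfl] at h
    push_cast at h
    rw [eq_div_iff (by positivity)]
    linear_combination -h
  have e₀ : (clfTerm m k : ℚ)
      = ((m : ℚ) + 1 - k) ^ 2 * clfTerm (m + 1) k
        / (2 * (m + 1) * (2 * ((m : ℚ) + 2 - (k + 1)) - 1)) := by
    rw [eq_div_iff (by positivity)]
    linear_combination -(clfTerm_succ_left m k)
  have e₂ : (clfTerm (m + 2) (k + 1) : ℚ)
      = ((m : ℚ) + 2 - k) ^ 2 * (2 * k + 1) * clfTerm (m + 2) k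
        / (((k : ℚ) + 1) ^ 2 * (2 * ((m : ℚ) + 2 - k) - 1)) := by
    have h := clfTerm_succ_right (m + 2) k
    push_cast at h
    rw [eq_div_iff (by positivity)]
    linear_combination h
  simp only [clfCert]
  rw [e₂, e₀, e₁]
  push_cast
  field_simp
  ring

lemma clfCert_zero (n : ℕ) : clfCert n 0 = 0 := by
  simp [clfCert]

lemma clfCert_succ_self (n : ℕ) : clfCert n (n + 1) = 0 := by
  simp [clfCert, clfTerm_eq_zero_of_lt n.lt_succ_self]

lemma clf_recurrence (m : ℕ) :
    ((m : ℚ) + 2) ^ 2 * clf (m + 2)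
      = 4 * (3 * ((m : ℚ) + 2) ^ 2 - 3 * (m + 2) + 1) * clf (m + 1)
        - 32 * ((m : ℚ) + 1) ^ 2 * clf m := by
  have hsum : ∀ n < m + 3, ∑ k ∈ range (m + 3), (clfTerm n k : ℚ) = clf n := fun n hn => by
    exact_mod_cast sum_range_clfTerm hn
  have htel := sum_range_sub (clfCert (m + 2)) (m + 3)
  simp only [← clfTerm_recurrence_eq_cert_sub, sum_add_distrib, sum_sub_distrib, ← mul_sum,
    hsum (m + 2) (by omega), hsum (m + 1) (by omega), hsum m (by omega), clfCert_zero,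
    clfCert_succ_self] at htel
  linear_combination htel

/-- The Catalan-Larcombe-French numbers, defined a priori as a rational
sequence by `P 0 = 1`, `P 1 = 8` and the recurrence
`n^2 P n = 8(3n^2-3n+1) P (n-1) - 128(n-1)^2 P (n-2)`, are positive integers. -/
theorem clf_pos_integer (P : ℕ → ℚ) (h0 : P 0 = 1) (h1 : P 1 = 8)
    (hrec : ∀ n : ℕ, 2 ≤ n →
      (n : ℚ) ^ 2 * P n =
        8 * (3 * (n : ℚ) ^ 2 - 3 * (n : ℚ) + 1) * P (n - 1)
          - 128 * ((n : ℚ) - 1) ^ 2 * P (n - 2)) :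
    ∀ n : ℕ, ∃ k : ℤ, 0 < k ∧ P n = (k : ℚ) := by
  have hP : ∀ n, P n = 2 ^ n * clf n := by
    refine Nat.twoStepInduction ?_ ?_ fun m ih₀ ih₁ => ?_
    · rw [h0, show clf 0 = 1 by decide]; norm_num
    · rw [h1, show clf 1 = 4 by decide]; norm_num
    · have hr := hrec (m + 2) (by omega)
      simp only [Nat.add_sub_cancel, show m + 2 - 1 = m + 1 by omega, ih₀, ih₁] at hr
      push_cast at hr
      refine mul_left_cancel₀ (pow_ne_zero 2 (by positivity : (m : ℚ) + 2 ≠ 0)) ?_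
      linear_combination hr - 2 ^ (m + 2) * clf_recurrence m
  intro n
  exact ⟨2 ^ n * clf n, by have := clf_pos n; positivity, by rw [hP]; push_cast; rfl⟩
end

section
/- For an odd prime p, P_{p-1} ≡ (-1)^{(p-1)/2} (mod p), where P_n are the Catalan-Larcombe-French numbers. -/
/-!
Modulo `p = 2m + 1` we have `-1/2 ≡ m`, so `C(2k, k) / 4^k = (-1)^k C(-1/2, k) ≡ (-1)^k C(m, k)`,
and the closed form `P_n = 8^n ∑_k C(n, 2k) C(2k, k)^2 / 16^k` suggests
`P_n ≡ 8^n ∑_k C(n, 2k) C(m, k)^2 (mod p)`. The right-hand side satisfies the recurrence of `P`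
(a Wilf–Zeilberger telescoping that only uses `4k^2 C(m,k)^2 ≡ (2k-1)^2 C(m,k-1)^2`), and the
recurrence determines `P_n` mod `p` while `n^2` is invertible, i.e. for `n < p`. At
`n = p - 1 = 2m` every `C(2m, 2k) ≡ 1`, so `P_{p-1} ≡ 8^{p-1} ∑_k C(m, k)^2 = 8^{p-1} C(2m, m)`,
and `8^{p-1} ≡ 1`, `C(p - 1, m) ≡ (-1)^m`.
-/

open Finset

theorem Nat.cast_add_one_mul_choose_succ {R : Type*} [CommRing R] (n j : ℕ) :
    ((j : R) + 1) * (n.choose (j + 1) : R) = ((n : R) - j) * (n.choose j : R) := by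
  rcases le_or_gt j n with hj | hj
  · have h := congrArg (Nat.cast : ℕ → R) (Nat.choose_succ_right_eq n j)
    push_cast [Nat.cast_sub hj] at h
    linear_combination h
  · simp [Nat.choose_eq_zero_of_lt hj, Nat.choose_eq_zero_of_lt (Nat.lt_succ_of_lt hj)]

theorem ZMod.choose_sub_one_eq_neg_one_pow {p : ℕ} (hp : p.Prime) :
    ∀ j ≤ p - 1, ((p - 1).choose j : ZMod p) = (-1) ^ j := by
  intro j
  induction j with
  | zero => simp
  | succ j ih =>
    intro hj
    have hpascal : p.choose (j + 1) = (p - 1).choose j + (p - 1).choose (j + 1) := by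
      conv_lhs => rw [← Nat.sub_add_cancel hp.one_le]
      exact Nat.choose_succ_succ _ _
    have hdvd : ((p.choose (j + 1) : ℕ) : ZMod p) = 0 :=
      (ZMod.natCast_eq_zero_iff _ _).2 (hp.dvd_choose_self j.succ_ne_zero (by omega))
    rw [hpascal, Nat.cast_add, ih (by omega)] at hdvd
    linear_combination hdvd

theorem clf_choose_identity {R : Type*} [CommRing R] (N k : ℕ) :
    ((N : R) + 2) ^ 2 * (N + 2).choose (2 * k + 2)
        - (3 * ((N : R) + 2) ^ 2 - 3 * ((N : R) + 2) + 1) * (N + 1).choose (2 * k + 2)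
        + (2 * ((N : R) + 1) ^ 2 + (2 * k + 3) * ((N : R) + 1)) * N.choose (2 * k + 2)
      = 4 * ((k : R) + 1) ^ 2 * (N + 1).choose (2 * k + 1) := by
  have r₁ := Nat.cast_add_one_mul_choose_succ (R := R) N (2 * k)
  have r₂ := Nat.cast_add_one_mul_choose_succ (R := R) N (2 * k + 1)
  rw [Nat.choose_succ_succ (N + 1), Nat.choose_succ_succ N (2 * k),
    Nat.choose_succ_succ N (2 * k + 1)]
  push_cast at r₁ r₂ ⊢
  linear_combination ((N : R) + 1) * r₂ - ((N : R) + 2 * k + 4) * r₁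

section EvenChooseSum

variable {R : Type*} [CommRing R] (u : ℕ → R)

def evenChooseSum (n : ℕ) : R :=
  ∑ k ∈ range (n + 1), (n.choose (2 * k) : R) * u k

theorem sum_range_eq_evenChooseSum {n M : ℕ} (h : n ≤ M) :
    ∑ k ∈ range (M + 1), (n.choose (2 * k) : R) * u k = evenChooseSum u n := by
  refine (sum_subset (range_subset_range.2 (by omega)) fun k _ hk => ?_).symm
  rw [mem_range] at hk
  rw [Nat.choose_eq_zero_of_lt (by omega), Nat.cast_zero, zero_mul]

variable {u}

theorem evenChooseSum_recurrence
    (hu : ∀ k : ℕ, 4 * ((k : R) + 1) ^ 2 * u (k + 1) = (2 * k + 1) ^ 2 * u k) (N : ℕ) :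
    ((N : R) + 2) ^ 2 * evenChooseSum u (N + 2)
      = (3 * ((N : R) + 2) ^ 2 - 3 * ((N : R) + 2) + 1) * evenChooseSum u (N + 1)
        - 2 * ((N : R) + 1) ^ 2 * evenChooseSum u N := by
  set F : ℕ → R := fun k =>
    ((N : R) + 2) ^ 2 * ((N + 2).choose (2 * k) * u k)
      - (3 * ((N : R) + 2) ^ 2 - 3 * ((N : R) + 2) + 1) * ((N + 1).choose (2 * k) * u k)
      + 2 * ((N : R) + 1) ^ 2 * (N.choose (2 * k) * u k)
  -- Wilf–Zeilberger certificate: `F (k + 1) = g k - g (k + 1)` by `clf_choose_identity`.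
  set g : ℕ → R := fun k => (2 * k + 1) * ((N : R) + 1) * N.choose (2 * k) * u k
  have htelescope : ∀ M, ∑ k ∈ range (M + 1), F k = -g M := by
    intro M
    induction M with
    | zero => simp [F, g]; ring
    | succ M ih =>
      rw [sum_range_succ, ih]
      have habs := congrArg (Nat.cast : ℕ → R) (Nat.add_one_mul_choose_eq N (2 * M))
      have hid := clf_choose_identity (R := R) N M
      have hM := hu M
      simp only [F, g]
      rw [show 2 * (M + 1) = 2 * M + 2 by ring]
      push_cast at habs ⊢
      linear_combination u (M + 1) * hid + ((N + 1).choose (2 * M + 1) : R) * hM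
        - (2 * (M : R) + 1) * u M * habs
  have hgN : g (N + 2) = 0 := by
    simp only [g, Nat.choose_eq_zero_of_lt (by omega : N < 2 * (N + 2)), Nat.cast_zero]
    ring
  have hsum := htelescope (N + 2)
  simp only [F, sum_add_distrib, sum_sub_distrib, ← mul_sum, hgN, neg_zero] at hsum
  rw [sum_range_eq_evenChooseSum u le_rfl, sum_range_eq_evenChooseSum u (by omega),
    sum_range_eq_evenChooseSum u (by omega)] at hsum
  linear_combination hsum

end EvenChooseSum

theorem eq_of_lt_of_three_term_recurrence {R : Type*} [Semiring R] [IsLeftCancelMulZero R]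
    {a b c d e : ℕ → R} {L : ℕ} (h₀ : a 0 = b 0) (h₁ : a 1 = b 1)
    (hc : ∀ n, n + 2 < L → c n ≠ 0)
    (ha : ∀ n, n + 2 < L → c n * a (n + 2) = d n * a (n + 1) + e n * a n)
    (hb : ∀ n, n + 2 < L → c n * b (n + 2) = d n * b (n + 1) + e n * b n) :
    ∀ n < L, a n = b n := by
  intro n
  induction n using Nat.strong_induction_on with
  | _ n ih =>
    intro hn
    match n, ih, hn with
    | 0, _, _ => exact h₀
    | 1, _, _ => exact h₁
    | n + 2, ih, hn =>
      refine mul_left_cancel₀ (hc n hn) ?_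
      rw [ha n hn, hb n hn, ih (n + 1) (by omega) (by omega), ih n (by omega) (by omega)]

theorem choose_sq_recurrence_of_two_mul_add_one_eq_zero {R : Type*} [CommRing R] {m : ℕ}
    (hm : 2 * (m : R) + 1 = 0) (k : ℕ) :
    4 * ((k : R) + 1) ^ 2 * (m.choose (k + 1) : R) ^ 2
      = (2 * k + 1) ^ 2 * (m.choose k : R) ^ 2 := by
  have h := Nat.cast_add_one_mul_choose_succ (R := R) m k
  have h₂ : 2 * ((k : R) + 1) * m.choose (k + 1) = -(2 * k + 1) * m.choose k := by
    linear_combination 2 * h + (m.choose k : R) * hm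
  linear_combination (2 * ((k : R) + 1) * m.choose (k + 1) - (2 * k + 1) * m.choose k) * h₂

theorem evenChooseSum_choose_sq_two_mul {p m : ℕ} (hp : p.Prime) (hpm : p = 2 * m + 1) :
    evenChooseSum (fun k => (m.choose k : ZMod p) ^ 2) (2 * m) = (-1) ^ m := by
  have hchoose : ∀ j ≤ 2 * m, ((2 * m).choose j : ZMod p) = (-1) ^ j := by
    simpa only [hpm, Nat.add_sub_cancel] using ZMod.choose_sub_one_eq_neg_one_pow hp
  have hsum := congrArg (Nat.cast : ℕ → ZMod p) (Nat.sum_range_choose_sq m)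
  push_cast at hsum
  rw [hchoose m (by omega)] at hsum
  rw [evenChooseSum, ← hsum]
  refine (sum_subset (range_subset_range.2 (by omega)) fun k _ hk => ?_).symm.trans
    (sum_congr rfl fun k hk => ?_)
  · simp [Nat.choose_eq_zero_of_lt (show m < k by simpa using hk)]
  · rw [hchoose (2 * k) (by rw [mem_range] at hk; omega), pow_mul, neg_one_sq, one_pow, one_mul]

theorem intCast_eq_eight_pow_mul_evenChooseSum {p m : ℕ} [Fact p.Prime] (hpm : p = 2 * m + 1)
    {P : ℕ → ℤ} (h0 : P 0 = 1) (h1 : P 1 = 8)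
    (hrec : ∀ n : ℕ, 2 ≤ n →
      (n : ℤ) ^ 2 * P n =
        8 * (3 * (n : ℤ) ^ 2 - 3 * (n : ℤ) + 1) * P (n - 1)
          - 128 * ((n : ℤ) - 1) ^ 2 * P (n - 2)) :
    ∀ n < p, (P n : ZMod p) = 8 ^ n * evenChooseSum (fun k => (m.choose k : ZMod p) ^ 2) n := by
  have hm : 2 * (m : ZMod p) + 1 = 0 := by
    have h : ((2 * m + 1 : ℕ) : ZMod p) = 0 := hpm ▸ ZMod.natCast_self p
    exact_mod_cast h
  have hS := evenChooseSum_recurrence (u := fun k => (m.choose k : ZMod p) ^ 2)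
    (choose_sq_recurrence_of_two_mul_add_one_eq_zero hm)
  refine eq_of_lt_of_three_term_recurrence (c := fun n => ((n : ZMod p) + 2) ^ 2)
    (d := fun n => 8 * (3 * ((n : ZMod p) + 2) ^ 2 - 3 * ((n : ZMod p) + 2) + 1))
    (e := fun n => -128 * ((n : ZMod p) + 1) ^ 2) ?_ ?_ ?_ ?_ ?_
  · simp [h0, evenChooseSum]
  · simp [h1, evenChooseSum, sum_range_succ]
  · intro n hn
    have := (ZMod.natCast_eq_zero_iff (n + 2) p).not.2 (Nat.not_dvd_of_pos_of_lt (by omega) hn)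
    push_cast at this
    exact pow_ne_zero 2 this
  · intro n _
    have := congrArg (Int.cast : ℤ → ZMod p) (hrec (n + 2) (by omega))
    simp only [Nat.add_sub_cancel, show n + 2 - 1 = n + 1 by omega] at this
    push_cast at this
    linear_combination this
  · intro n _
    linear_combination (8 : ZMod p) ^ (n + 2) * hS n

/-- For an odd prime `p`, `P (p-1) ≡ (-1)^((p-1)/2) (mod p)` for the
Catalan-Larcombe-French numbers. -/
theorem clf_p_sub_one (p : ℕ) (hp : p.Prime) (hodd : Odd p)
    (P : ℕ → ℤ) (h0 : P 0 = 1) (h1 : P 1 = 8)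
    (hrec : ∀ n : ℕ, 2 ≤ n →
      (n : ℤ) ^ 2 * P n =
        8 * (3 * (n : ℤ) ^ 2 - 3 * (n : ℤ) + 1) * P (n - 1)
          - 128 * ((n : ℤ) - 1) ^ 2 * P (n - 2)) :
    P (p - 1) ≡ (-1) ^ ((p - 1) / 2) [ZMOD p] := by
  have := Fact.mk hp
  obtain ⟨m, hpm⟩ := hodd
  have h8 : (8 : ZMod p) ≠ 0 := by
    have h : ¬ p ∣ 2 ^ 3 := fun h => by
      have := (Nat.prime_dvd_prime_iff_eq hp Nat.prime_two).1 (hp.dvd_of_dvd_pow h)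
      omega
    exact_mod_cast (ZMod.natCast_eq_zero_iff 8 p).not.2 h
  rw [← ZMod.intCast_eq_intCast_iff,
    intCast_eq_eight_pow_mul_evenChooseSum hpm h0 h1 hrec (p - 1) (by omega),
    ZMod.pow_card_sub_one_eq_one h8, show p - 1 = 2 * m by omega,
    evenChooseSum_choose_sq_two_mul hp hpm]
  simp
end

section
/- For an odd prime p, 16 P_{p-2} ≡ (-1)^{(p-1)/2} (mod p), where P_n are the Catalan-Larcombe-French numbers. -/
/-!
Write `θ = X d/dX`. The power series `V = ∑ 2ⁿ C(2n,n) xⁿ/n!` satisfies `θ²V = x(8θ + 4)V`,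
and the symmetric square of this operator is the one encoding the recurrence of `P`; hence
`P n / n!` is the `n`-th coefficient of `V²`, i.e. `P n = 2ⁿ ∑ₖ C(n,k) C(2k,k) C(2n-2k,n-k)`.
For `p = 2j + 3` every term of this sum for `n = p - 2` has a central binomial coefficient
`C(2i,i)` with `p ≤ 2i < 2p`, hence divisible by `p`, except the two terms `k = j, j + 1`,
which add up to `C(2j+2,j+1)² C(2j,j)`. Modulo `p`, `C(2j+2,j+1) = C(p-1,j+1) ≡ (-1)^(j+1)`, and
`(j+1) C(2j+2,j+1) = 2(2j+1) C(2j,j)` gives `8 C(2j,j) ≡ (-1)^(j+1)`; Fermat's little theorem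
disposes of the power of `2`.
-/

open PowerSeries Finset
open scoped Nat

theorem Derivation.map_ofNat {R A : Type*} [CommRing R] [CommRing A] [Algebra R A]
    (θ : Derivation R A A) (n : ℕ) [n.AtLeastTwo] : θ (OfNat.ofNat n : A) = 0 := by
  rw [← Nat.cast_ofNat]
  exact θ.map_natCast n

theorem Derivation.symmSq_of_second_order {R A : Type*} [CommRing R] [CommRing A]
    [Algebra R A] (θ : Derivation R A A) {x v : A} (hx : θ x = x)
    (hv : θ (θ v) = x * (8 * θ v + 4 * v)) :
    θ (θ (θ (v ^ 2))) = x * (8 * (3 * θ (θ (v ^ 2)) + 3 * θ (v ^ 2) + v ^ 2))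
      - x ^ 2 * (128 * (θ (v ^ 2) + v ^ 2)) := by
  simp only [Derivation.leibniz, Derivation.leibniz_pow, map_add, map_zero, hx, hv, smul_eq_mul,
    nsmul_eq_mul, θ.map_ofNat, θ.map_natCast]
  ring

namespace PowerSeries

variable (R : Type*) [CommRing R]

noncomputable def eulerOp : Derivation R R⟦X⟧ R⟦X⟧ := (X : R⟦X⟧) • d⁄dX R

variable {R}

theorem coeff_eulerOp (f : R⟦X⟧) (n : ℕ) : coeff n (eulerOp R f) = n * coeff n f := by
  change coeff n (X * d⁄dX R f) = _
  cases n with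
  | zero => simp
  | succ n => rw [coeff_succ_X_mul, coeff_derivative, mul_comm]; push_cast; rfl

theorem coeff_ofNat_mul (k n : ℕ) [k.AtLeastTwo] (f : R⟦X⟧) :
    coeff n ((no_index (OfNat.ofNat k) : R⟦X⟧) * f) = OfNat.ofNat k * coeff n f := by
  rw [← map_ofNat C k, coeff_C_mul]

theorem eulerOp_X : eulerOp R X = X := by
  change X * d⁄dX R X = X
  simp

end PowerSeries

/-- Its square is the exponential generating function of the Catalan–Larcombe–French numbers. -/
noncomputable def clfRoot : ℚ⟦X⟧ := mk fun n => 2 ^ n * n.centralBinom / n !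

theorem eulerOp_eulerOp_clfRoot :
    eulerOp ℚ (eulerOp ℚ clfRoot) = X * (8 * eulerOp ℚ clfRoot + 4 * clfRoot) := by
  ext n
  cases n with
  | zero => simp [coeff_eulerOp]
  | succ n =>
    have h : ((n + 1 : ℕ) : ℚ) * (n + 1).centralBinom = 2 * (2 * n + 1) * n.centralBinom := by
      exact_mod_cast Nat.succ_mul_centralBinom_succ n
    simp only [coeff_eulerOp, coeff_succ_X_mul, clfRoot, coeff_mk, map_add, coeff_ofNat_mul,
      Nat.factorial_succ, Nat.cast_mul, pow_succ]
    field_simp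
    linear_combination 2 * h

theorem factorial_mul_coeff_clfRoot_sq_add_two (m : ℕ) :
    ((m + 2 : ℕ) : ℚ) ^ 2 * ((m + 2)! * coeff (m + 2) (clfRoot ^ 2)) =
      8 * (3 * ((m + 2 : ℕ) : ℚ) ^ 2 - 3 * (m + 2 : ℕ) + 1)
          * ((m + 1)! * coeff (m + 1) (clfRoot ^ 2))
        - 128 * (((m + 2 : ℕ) : ℚ) - 1) ^ 2 * (m ! * coeff m (clfRoot ^ 2)) := by
  have h := congrArg (coeff (m + 2))
    ((eulerOp ℚ).symmSq_of_second_order eulerOp_X eulerOp_eulerOp_clfRoot)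
  rw [map_sub, coeff_succ_X_mul, coeff_X_pow_mul] at h
  simp only [coeff_ofNat_mul, map_add, coeff_eulerOp] at h
  rw [Nat.factorial_succ, Nat.factorial_succ]
  push_cast at h ⊢
  linear_combination (m ! : ℚ) * (m + 1) * h

def centralBinomConv (n : ℕ) : ℕ :=
  ∑ ij ∈ antidiagonal n, n.choose ij.1 * ij.1.centralBinom * ij.2.centralBinom

theorem factorial_mul_coeff_clfRoot_sq (n : ℕ) :
    (n ! : ℚ) * coeff n (clfRoot ^ 2) = 2 ^ n * centralBinomConv n := by
  rw [sq, coeff_mul, centralBinomConv, mul_sum]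
  push_cast
  rw [mul_sum]
  refine sum_congr rfl fun ⟨i, j⟩ hij => ?_
  rw [HasAntidiagonal.mem_antidiagonal] at hij
  subst hij
  simp only [clfRoot, coeff_mk]
  rw [Nat.cast_add_choose]
  field_simp
  ring

theorem eq_two_pow_mul_centralBinomConv (P : ℕ → ℤ) (h0 : P 0 = 1) (h1 : P 1 = 8)
    (hrec : ∀ n : ℕ, 2 ≤ n →
      (n : ℤ) ^ 2 * P n =
        8 * (3 * (n : ℤ) ^ 2 - 3 * (n : ℤ) + 1) * P (n - 1)
          - 128 * ((n : ℤ) - 1) ^ 2 * P (n - 2)) (n : ℕ) :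
    P n = 2 ^ n * centralBinomConv n := by
  suffices h : (P n : ℚ) = n ! * coeff n (clfRoot ^ 2) by
    rw [factorial_mul_coeff_clfRoot_sq] at h
    exact_mod_cast h
  induction n using Nat.twoStepInduction with
  | zero => simp [h0, clfRoot]
  | one =>
    rw [factorial_mul_coeff_clfRoot_sq, show centralBinomConv 1 = 4 by decide, h1]
    norm_num
  | more m ih₀ ih₁ =>
    have h := hrec (m + 2) (by omega)
    rw [show m + 2 - 1 = m + 1 by omega, show m + 2 - 2 = m by omega] at h
    have hne : ((m + 2 : ℕ) : ℚ) ^ 2 ≠ 0 := by positivity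
    refine mul_left_cancel₀ hne ?_
    rw [factorial_mul_coeff_clfRoot_sq_add_two, ← ih₀, ← ih₁]
    exact_mod_cast h

theorem ZMod.natCast_choose_sub_one {p : ℕ} (hp : p.Prime) {i : ℕ} (hi : i < p) :
    ((p - 1).choose i : ZMod p) = (-1) ^ i := by
  induction i with
  | zero => simp
  | succ i ih =>
    have hpascal : p.choose (i + 1) = (p - 1).choose i + (p - 1).choose (i + 1) := by
      conv_lhs => rw [← Nat.sub_add_cancel hp.one_le]
      exact Nat.choose_succ_succ' _ _
    have hdvd : (p.choose (i + 1) : ZMod p) = 0 :=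
      (ZMod.natCast_eq_zero_iff _ _).2 (hp.dvd_choose_self i.succ_ne_zero hi)
    rw [hpascal, Nat.cast_add, ih (by omega)] at hdvd
    linear_combination hdvd

theorem ZMod.natCast_centralBinom_eq_zero {p : ℕ} (hp : p.Prime) {i : ℕ} (hi : i < p)
    (hpi : p ≤ 2 * i) : (i.centralBinom : ZMod p) = 0 := by
  rw [Nat.centralBinom_eq_two_mul_choose, ZMod.natCast_eq_zero_iff]
  exact hp.dvd_choose hi (by omega) hpi

theorem centralBinomConv_two_mul_add_one_mod {j : ℕ} (hp : (2 * j + 3).Prime) :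
    (centralBinomConv (2 * j + 1) : ZMod (2 * j + 3))
      = (j + 1).centralBinom ^ 2 * j.centralBinom := by
  have hvanish : ∀ ab ∈ antidiagonal (2 * j + 1), ab ≠ (j, j + 1) ∧ ab ≠ (j + 1, j) →
      (((2 * j + 1).choose ab.1 * ab.1.centralBinom * ab.2.centralBinom : ℕ) :
        ZMod (2 * j + 3)) = 0 := by
    rintro ⟨a, b⟩ hab hne
    simp only [HasAntidiagonal.mem_antidiagonal] at hab
    simp only [ne_eq, Prod.mk.injEq] at hne
    push_cast
    rcases le_or_gt (j + 2) a with ha | ha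
    · rw [ZMod.natCast_centralBinom_eq_zero hp (i := a) (by omega) (by omega), mul_zero, zero_mul]
    · rw [ZMod.natCast_centralBinom_eq_zero hp (i := b) (by omega) (by omega), mul_zero]
  have hpascal : (j + 1).centralBinom = (2 * j + 1).choose j + (2 * j + 1).choose (j + 1) := by
    rw [Nat.centralBinom_eq_two_mul_choose, mul_add_one, ← Nat.choose_succ_succ']
  rw [centralBinomConv, Nat.cast_sum,
    sum_eq_add_of_mem (j, j + 1) (j + 1, j) (by simp; omega) (by simp; omega) (by simp) hvanish]
  push_cast [hpascal]
  ring

theorem natCast_centralBinom_succ_mod {j : ℕ} (hp : (2 * j + 3).Prime) :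
    ((j + 1).centralBinom : ZMod (2 * j + 3)) = (-1) ^ (j + 1) := by
  rw [Nat.centralBinom_eq_two_mul_choose, show 2 * (j + 1) = 2 * j + 3 - 1 by omega]
  exact ZMod.natCast_choose_sub_one hp (by omega)

theorem eight_mul_centralBinom_mod {j : ℕ} (hp : (2 * j + 3).Prime) :
    8 * (j.centralBinom : ZMod (2 * j + 3)) = (-1) ^ (j + 1) := by
  have hrel : ((j + 1 : ℕ) : ZMod (2 * j + 3)) * (j + 1).centralBinom
      = 2 * (2 * j + 1) * j.centralBinom := by
    exact_mod_cast congrArg (Nat.cast : ℕ → ZMod (2 * j + 3)) (Nat.succ_mul_centralBinom_succ j)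
  have hp0 : ((2 * j + 3 : ℕ) : ZMod (2 * j + 3)) = 0 := ZMod.natCast_self _
  push_cast at hrel hp0
  linear_combination 2 * hrel + 4 * (j.centralBinom : ZMod (2 * j + 3)) * hp0
    - 2 * (j + 1) * natCast_centralBinom_succ_mod hp - (-1) ^ (j + 1) * hp0

theorem eight_mul_centralBinomConv_mod {j : ℕ} (hp : (2 * j + 3).Prime) :
    8 * (centralBinomConv (2 * j + 1) : ZMod (2 * j + 3)) = (-1) ^ (j + 1) := by
  rw [centralBinomConv_two_mul_add_one_mod hp, natCast_centralBinom_succ_mod hp, ← mul_assoc,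
    mul_comm 8, mul_assoc, eight_mul_centralBinom_mod hp, ← pow_mul, mul_comm (j + 1), pow_mul,
    neg_one_sq, one_pow, one_mul]

/-- For an odd prime `p`, `16 P (p-2) ≡ (-1)^((p-1)/2) (mod p)` for the
Catalan-Larcombe-French numbers. -/
theorem clf_p_sub_two (p : ℕ) (hp : p.Prime) (hodd : Odd p)
    (P : ℕ → ℤ) (h0 : P 0 = 1) (h1 : P 1 = 8)
    (hrec : ∀ n : ℕ, 2 ≤ n →
      (n : ℤ) ^ 2 * P n =
        8 * (3 * (n : ℤ) ^ 2 - 3 * (n : ℤ) + 1) * P (n - 1)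
          - 128 * ((n : ℤ) - 1) ^ 2 * P (n - 2)) :
    16 * P (p - 2) ≡ (-1) ^ ((p - 1) / 2) [ZMOD p] := by
  obtain ⟨j, rfl⟩ : ∃ j, p = 2 * j + 3 := by
    obtain ⟨k, rfl⟩ := hodd
    exact ⟨k - 1, by have := hp.two_le; omega⟩
  have := Fact.mk hp
  have htwo : (2 : ZMod (2 * j + 3)) ≠ 0 := by
    intro h
    have := Nat.le_of_dvd two_pos ((ZMod.natCast_eq_zero_iff 2 _).1 (by exact_mod_cast h))
    omega
  have hfermat : (2 : ZMod (2 * j + 3)) ^ (2 * j + 2) = 1 := ZMod.pow_card_sub_one_eq_one htwo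
  rw [show 2 * j + 3 - 2 = 2 * j + 1 by omega, show (2 * j + 3 - 1) / 2 = j + 1 by omega,
    ← ZMod.intCast_eq_intCast_iff, eq_two_pow_mul_centralBinomConv P h0 h1 hrec]
  push_cast
  calc (16 : ZMod (2 * j + 3)) * (2 ^ (2 * j + 1) * centralBinomConv (2 * j + 1))
      = 2 ^ (2 * j + 2) * (8 * centralBinomConv (2 * j + 1)) := by ring
    _ = (-1) ^ (j + 1) := by rw [hfermat, one_mul, eight_mul_centralBinomConv_mod hp]
end

section
/- For an odd prime p and 0 ≤ n ≤ p-1, p divides P_n if and only if p divides P_{p-1-n}, where P_n are the Catalan-Larcombe-French numbers. -/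
/-!
Modulo `p` the recurrence is invariant under `n ↦ p - 1 - n` up to the factor `128`: since
`p ≡ 0`, the coefficients at index `p + 1 - n` coincide with those at `n` with the roles of `n²`
and `(n - 1)²` exchanged. Hence `n ↦ 128 ^ n * P (p - 1 - n)` satisfies the recurrence up to
`p - 1` with the initial values of `P (p - 1) * P n`, and the leading coefficients `n²` are units
for `n < p`, so `128 ^ n * P (p - 1 - n) ≡ P (p - 1) * P n`. Taking `n = p - 1` shows that
`P (p - 1)` is a unit mod `p`.
-/

theorem eq_of_recurrence {R : Type*} [CommRing R] [IsDomain R] {N : ℕ} {u v a : ℕ → R}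
    {f : ℕ → R → R → R} (ha : ∀ n, n + 2 ≤ N → a n ≠ 0)
    (hu : ∀ n, n + 2 ≤ N → a n * u (n + 2) = f n (u (n + 1)) (u n))
    (hv : ∀ n, n + 2 ≤ N → a n * v (n + 2) = f n (v (n + 1)) (v n))
    (h0 : u 0 = v 0) (h1 : u 1 = v 1) : ∀ n, n ≤ N → u n = v n
  | 0, _ => h0
  | 1, _ => h1
  | n + 2, hn => mul_left_cancel₀ (ha n hn) <| by
    rw [hu n hn, hv n hn, eq_of_recurrence ha hu hv h0 h1 (n + 1) (by omega),
      eq_of_recurrence ha hu hv h0 h1 n (by omega)]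

section CatalanLarcombeFrench

variable {R : Type*} [CommRing R]

/-- The recurrence at index `n + 2`, shifted so that no truncated subtraction occurs. -/
def ClfRecAt (u : ℕ → R) (n : ℕ) : Prop :=
  ((n : R) + 2) ^ 2 * u (n + 2) =
    8 * (3 * ((n : R) + 2) ^ 2 - 3 * ((n : R) + 2) + 1) * u (n + 1)
      - 128 * ((n : R) + 1) ^ 2 * u n

theorem ClfRecAt.const_mul {u : ℕ → R} {n : ℕ} (c : R) (h : ClfRecAt u n) :
    ClfRecAt (fun k => c * u k) n := by
  unfold ClfRecAt at *
  linear_combination c * h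

theorem ClfRecAt.reverse {u : ℕ → R} {N n : ℕ} (hN : (N : R) + 1 = 0) (hn : n + 2 ≤ N)
    (h : ClfRecAt u (N - (n + 2))) : ClfRecAt (fun k => 128 ^ k * u (N - k)) n := by
  have hcast : ((N - (n + 2) : ℕ) : R) = -((n : R) + 3) := by
    push_cast [Nat.cast_sub hn]
    linear_combination hN
  unfold ClfRecAt at *
  rw [hcast, show N - (n + 2) + 2 = N - n by omega,
    show N - (n + 2) + 1 = N - (n + 1) by omega] at h
  rw [pow_succ, pow_succ]
  linear_combination (128 : R) ^ n * 128 * h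

theorem ClfRecAt.reverse_one {u : ℕ → R} {N : ℕ} (hN : (N : R) + 1 = 0) (hN1 : 1 ≤ N)
    (h : ClfRecAt u (N - 1)) : 128 * u (N - 1) = 8 * u N := by
  have hcast : ((N - 1 : ℕ) : R) = -2 := by
    rw [Nat.cast_sub hN1]
    linear_combination hN
  unfold ClfRecAt at h
  rw [hcast, show N - 1 + 2 = N + 1 by omega, show N - 1 + 1 = N by omega] at h
  linear_combination h

variable [IsDomain R] {p : ℕ} [CharP R p] {u : ℕ → R}

theorem clf_pow_mul_reflect_eq (hp : p.Prime) (h0 : u 0 = 1) (h1 : u 1 = 8)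
    (hu : ∀ n, ClfRecAt u n) : ∀ n, n ≤ p - 1 → 128 ^ n * u (p - 1 - n) = u (p - 1) * u n := by
  have hN : ((p - 1 : ℕ) : R) + 1 = 0 := by
    rw [Nat.cast_sub hp.one_le, Nat.cast_one, sub_add_cancel, CharP.cast_eq_zero]
  have hunit : ∀ n, n + 2 ≤ p - 1 → ((n : R) + 2) ^ 2 ≠ 0 := fun n hn => by
    refine pow_ne_zero 2 fun h => ?_
    have hdvd : p ∣ n + 2 := (CharP.cast_eq_zero_iff R p _).mp (by push_cast; exact h)
    have := Nat.le_of_dvd (by omega) hdvd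
    omega
  refine eq_of_recurrence
    (f := fun n x y => 8 * (3 * ((n : R) + 2) ^ 2 - 3 * ((n : R) + 2) + 1) * x
      - 128 * ((n : R) + 1) ^ 2 * y) hunit (fun n hn => (hu (p - 1 - (n + 2))).reverse hN hn)
    (fun n _ => (hu n).const_mul (u (p - 1))) (by simp [h0]) ?_
  have := (hu (p - 1 - 1)).reverse_one hN (by have := hp.two_le; omega)
  simp only [pow_one, h1]
  linear_combination this

theorem clf_reflect_eq_zero_iff (hp : p.Prime) (h2 : (2 : R) ≠ 0) (h0 : u 0 = 1) (h1 : u 1 = 8)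
    (hu : ∀ n, ClfRecAt u n) {n : ℕ} (hn : n ≤ p - 1) : u n = 0 ↔ u (p - 1 - n) = 0 := by
  have h128 : (128 : R) ≠ 0 := by
    rw [show (128 : R) = 2 ^ 7 by norm_num]
    exact pow_ne_zero 7 h2
  have hreflect := clf_pow_mul_reflect_eq hp h0 h1 hu
  have hlast : u (p - 1) ≠ 0 := by
    have h := hreflect (p - 1) le_rfl
    rw [Nat.sub_self, h0, mul_one] at h
    exact fun h' => pow_ne_zero (p - 1) h128 (by rw [h, h', zero_mul])
  rw [← mul_right_inj' hlast, ← hreflect n hn, mul_zero, mul_eq_zero,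
    or_iff_right (pow_ne_zero n h128)]

end CatalanLarcombeFrench

/-- For an odd prime `p` and `0 ≤ n ≤ p-1`, `p ∣ P n ↔ p ∣ P (p-1-n)` for the
Catalan-Larcombe-French numbers. -/
theorem clf_dvd_symmetry (p : ℕ) (hp : p.Prime) (hodd : Odd p)
    (P : ℕ → ℤ) (h0 : P 0 = 1) (h1 : P 1 = 8)
    (hrec : ∀ n : ℕ, 2 ≤ n →
      (n : ℤ) ^ 2 * P n =
        8 * (3 * (n : ℤ) ^ 2 - 3 * (n : ℤ) + 1) * P (n - 1)
          - 128 * ((n : ℤ) - 1) ^ 2 * P (n - 2)) :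
    ∀ n : ℕ, n ≤ p - 1 → ((p : ℤ) ∣ P n ↔ (p : ℤ) ∣ P (p - 1 - n)) := by
  intro n hn
  have : Fact p.Prime := ⟨hp⟩
  have h2 : (2 : ZMod p) ≠ 0 := by
    refine Ring.two_ne_zero ?_
    rw [ZMod.ringChar_zmod_n]
    rintro rfl
    exact Nat.not_even_iff_odd.mpr hodd even_two
  have hu : ∀ k, ClfRecAt (fun m => (P m : ZMod p)) k := fun k => by
    have h := congrArg (Int.cast : ℤ → ZMod p) (hrec (k + 2) (by omega))
    simp only [Nat.add_sub_cancel, show k + 2 - 1 = k + 1 by omega] at h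
    push_cast at h
    unfold ClfRecAt
    linear_combination h
  simp only [← ZMod.intCast_zmod_eq_zero_iff_dvd]
  exact clf_reflect_eq_zero_iff hp h2 (by simp [h0]) (by simp [h1]) hu hn
end

section
/- For an odd prime p, f_{p-1} ≡ 1 (mod p), where f_n = ∑_{r=0}^{n} C(n,r)^3 is the n-th Franel number. -/
/-- The Franel numbers. -/
def franel (n : ℕ) : ℕ := ∑ r ∈ Finset.range (n + 1), (n.choose r) ^ 3

open Finset

theorem Nat.Prime.cast_choose_pred {p r : ℕ} (hp : p.Prime) (hr : r < p) :
    ((p - 1).choose r : ZMod p) = (-1) ^ r := by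
  induction r with
  | zero => simp
  | succ r ih =>
    have pascal : p.choose (r + 1) = (p - 1).choose r + (p - 1).choose (r + 1) := by
      rw [← Nat.choose_succ_succ', Nat.sub_add_cancel hp.one_le]
    have hzero : (p.choose (r + 1) : ZMod p) = 0 :=
      (ZMod.natCast_eq_zero_iff _ _).mpr (hp.dvd_choose_self r.succ_ne_zero hr)
    rw [pascal, Nat.cast_add, ih (by omega)] at hzero
    rw [pow_succ]
    linear_combination hzero

theorem sum_choose_pred_pow_modEq_one {p k : ℕ} (hp : p.Prime) (hp_odd : Odd p) (hk : Odd k) :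
    ∑ r ∈ range p, (p - 1).choose r ^ k ≡ 1 [MOD p] := by
  rw [← ZMod.natCast_eq_natCast_iff]
  calc ((∑ r ∈ range p, (p - 1).choose r ^ k : ℕ) : ZMod p)
      = ∑ r ∈ range p, (-1 : ZMod p) ^ r := by
        push_cast
        refine sum_congr rfl fun r hr => ?_
        rw [hp.cast_choose_pred (mem_range.mp hr), ← pow_mul, mul_comm, pow_mul, hk.neg_one_pow]
    _ = 1 := by simp [neg_one_geom_sum, Nat.not_even_iff_odd.mpr hp_odd]
    _ = ((1 : ℕ) : ZMod p) := Nat.cast_one.symm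

/-- For an odd prime `p`, `f (p-1) ≡ 1 (mod p)`. -/
theorem franel_p_sub_one (p : ℕ) (hp : p.Prime) (hodd : Odd p) :
    franel (p - 1) ≡ 1 [MOD p] := by
  rw [franel, Nat.sub_add_cancel hp.one_le]
  exact sum_choose_pred_pow_modEq_one hp hodd (by decide)
end

section
/- For any prime p and 0 ≤ n ≤ p-1, the Apéry-like numbers a_n = ∑_{k=0}^n C(n,k)^2 C(n+k,k) satisfy a_n ≡ (-1)^n a_{p-1-n} (mod p). -/
/-!
Over `ℤ`, `a n = ∑_k (-1)^(n-k) C(n,k) C(n+k,k)^2`: expanding one factor by Vandermonde,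
`C(n+k,k) = ∑_j C(n,j) C(k,j)`, reduces this to the binomial transform
`∑_k (-1)^(n-k) C(n,k) C(n+k,k) C(k,j) = C(n,j) C(n+j,j)`, which after `C(n,k) C(k,j) =
C(n,j) C(n-j,k-j)` is an `(n-j)`-fold forward difference of `x ↦ C(x,n)`.

Modulo `p`, put `m = p-1-n`, so `m ≡ -(n+1)`. Comparing falling with rising factorials gives
`C(m,k) ≡ (-1)^k C(n+k,k)` and, symmetrically, `C(n,k) ≡ (-1)^k C(m+k,k)` for `k < p`; hence the
summand of `a m` is `(-1)^k C(n,k) C(n+k,k)^2`, and `(-1)^n a m` is the alternating sum above.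
-/

/-- The Apéry-like numbers `a n = ∑_{k=0}^n C(n,k)^2 C(n+k,k)`. -/
def aperyLike (n : ℕ) : ℕ := ∑ k ∈ Finset.range (n + 1), (n.choose k) ^ 2 * ((n + k).choose k)

open Finset Nat

-- The left side is the `N`-th forward difference of `x ↦ C(x, N + j)` at `y`.
theorem alternating_sum_choose_mul_choose_add (N j y : ℕ) :
    ∑ i ∈ range (N + 1), (-1 : ℤ) ^ (N - i) * N.choose i * (y + i).choose (N + j) = y.choose j := by
  have h := fwdDiff_iter_eq_sum_shift 1 (fun x ↦ ((x.choose (N + j) : ℕ) : ℤ)) N y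
  rw [fwdDiff_iter_choose] at h
  simpa [smul_eq_mul] using h.symm

theorem alternating_sum_choose_mul_choose_add_self_mul_choose {n j : ℕ} (hj : j ≤ n) :
    ∑ k ∈ range (n + 1), (-1 : ℤ) ^ (n - k) * n.choose k * (n + k).choose k * k.choose j =
      n.choose j * (n + j).choose j := by
  obtain ⟨N, rfl⟩ := Nat.exists_eq_add_of_le hj
  rw [add_assoc, sum_range_add, sum_eq_zero fun k hk ↦ by
    rw [choose_eq_zero_of_lt (mem_range.1 hk), cast_zero, mul_zero], zero_add,
    ← alternating_sum_choose_mul_choose_add N j (j + N + j), mul_sum]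
  refine sum_congr rfl fun i _ ↦ ?_
  have h := choose_mul (n := j + N) (le_add_right j i)
  rw [Nat.add_sub_cancel_left, Nat.add_sub_cancel_left] at h
  have h' : ((j + N).choose (j + i) : ℤ) * (j + i).choose j = (j + N).choose j * N.choose i := by
    exact_mod_cast h
  rw [Nat.add_sub_add_left, show j + N + j + i = j + N + (j + i) by ring,
    show j + N + (j + i) = (j + i) + (N + j) by ring, ← choose_symm_add]
  linear_combination (-1 : ℤ) ^ (N - i) * ((j + i + (N + j)).choose (j + i) : ℤ) * h'

theorem choose_add_eq_sum_choose_mul_choose (n k : ℕ) :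
    (n + k).choose k = ∑ j ∈ range (n + 1), n.choose j * k.choose j := by
  rw [← choose_symm_add, add_choose_eq, sum_antidiagonal_eq_sum_range_succ_mk, ← sum_range_reflect]
  refine sum_congr rfl fun j hj ↦ ?_
  have hj := mem_range.1 hj
  rw [succ_sub_one, choose_symm (by omega), Nat.sub_sub_self (by omega)]

theorem aperyLike_eq_alternating_sum (n : ℕ) :
    (aperyLike n : ℤ) =
      ∑ k ∈ range (n + 1), (-1 : ℤ) ^ (n - k) * n.choose k * (n + k).choose k ^ 2 := by
  have expand (k : ℕ) : (-1 : ℤ) ^ (n - k) * n.choose k * (n + k).choose k ^ 2 =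
      ∑ j ∈ range (n + 1), (n.choose j : ℤ) *
        ((-1 : ℤ) ^ (n - k) * n.choose k * (n + k).choose k * k.choose j) := by
    rw [sq, ← mul_assoc, choose_add_eq_sum_choose_mul_choose n k, cast_sum, mul_sum]
    exact sum_congr rfl fun j _ ↦ by push_cast; ring
  rw [sum_congr rfl fun k _ ↦ expand k, sum_comm, aperyLike, cast_sum]
  refine sum_congr rfl fun j hj ↦ ?_
  rw [← mul_sum, alternating_sum_choose_mul_choose_add_self_mul_choose (mem_range_succ_iff.1 hj)]
  push_cast
  ring

theorem aperyLike_eq_sum_range {n N : ℕ} (h : n < N) :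
    aperyLike n = ∑ k ∈ range N, n.choose k ^ 2 * (n + k).choose k :=
  sum_subset (range_subset_range.2 h) fun k _ hk ↦ by
    rw [choose_eq_zero_of_lt (by rw [mem_range] at hk; omega)]
    simp

theorem cast_descFactorial_eq_neg_one_pow_mul_ascFactorial {R : Type*} [CommRing R] {m n : ℕ}
    (h : (m + n + 1 : R) = 0) (k : ℕ) :
    (m.descFactorial k : R) = (-1) ^ k * (n + 1).ascFactorial k := by
  induction k with
  | zero => simp
  | succ k ih =>
    rw [descFactorial_succ, ascFactorial_succ, cast_mul, cast_mul, ih]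
    rcases le_or_gt k m with hk | hk
    · rw [cast_sub hk]
      push_cast
      linear_combination (-1 : R) ^ k * ((n + 1).ascFactorial k : R) * h
    · have hzero : (-1 : R) ^ k * (n + 1).ascFactorial k = 0 := by
        rw [← ih, descFactorial_of_lt hk, cast_zero]
      push_cast
      linear_combination ((m - k : ℕ) + (n + 1 + k : R)) * hzero

theorem cast_choose_eq_neg_one_pow_mul_choose {R : Type*} [CommRing R] [IsDomain R] {m n k : ℕ}
    (h : (m + n + 1 : R) = 0) (hk : (k ! : R) ≠ 0) :
    (m.choose k : R) = (-1) ^ k * (n + k).choose k := by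
  apply mul_left_cancel₀ hk
  have := cast_descFactorial_eq_neg_one_pow_mul_ascFactorial h k
  rw [descFactorial_eq_factorial_mul_choose, ascFactorial_eq_factorial_mul_choose] at this
  push_cast at this
  linear_combination this

theorem cast_aperyLike_sub_eq_sum {p n : ℕ} [Fact p.Prime] (hn : n < p) :
    (aperyLike (p - 1 - n) : ZMod p) =
      ∑ k ∈ range (n + 1), (-1 : ZMod p) ^ k * n.choose k * (n + k).choose k ^ 2 := by
  set m := p - 1 - n with hm_def
  have hmn : (m + n + 1 : ZMod p) = 0 := by
    exact_mod_cast show ((m + n + 1 : ℕ) : ZMod p) = 0 by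
      rw [show m + n + 1 = p by omega, ZMod.natCast_self]
  have hfact {k : ℕ} (hk : k < p) : (k ! : ZMod p) ≠ 0 := by
    rw [Ne, ZMod.natCast_eq_zero_iff, (Fact.out : p.Prime).dvd_factorial]
    omega
  have hm (k : ℕ) (hk : k < p) := cast_choose_eq_neg_one_pow_mul_choose hmn (hfact hk)
  have hn' (k : ℕ) (hk : k < p) :=
    cast_choose_eq_neg_one_pow_mul_choose (m := n) (n := m) (by linear_combination hmn) (hfact hk)
  rw [aperyLike_eq_sum_range (show m < p by omega), cast_sum,
    sum_subset (range_subset_range.2 (show n + 1 ≤ p by omega))]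
  · refine sum_congr rfl fun k hk ↦ ?_
    push_cast
    rw [hm k (mem_range.1 hk), hn' k (mem_range.1 hk)]
    ring
  · intro k _ hkn
    rw [choose_eq_zero_of_lt (by rw [mem_range] at hkn; omega)]
    simp

/-- For any prime `p` and `0 ≤ n ≤ p-1`, `a n ≡ (-1)^n a (p-1-n) (mod p)`. -/
theorem aperyLike_symmetry (p : ℕ) (hp : p.Prime) :
    ∀ n : ℕ, n ≤ p - 1 →
      (aperyLike n : ℤ) ≡ (-1) ^ n * (aperyLike (p - 1 - n) : ℤ) [ZMOD p] := by
  intro n hn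
  have := Fact.mk hp
  rw [← ZMod.intCast_eq_intCast_iff, aperyLike_eq_alternating_sum]
  push_cast
  rw [cast_aperyLike_sub_eq_sum (by have := hp.one_lt; omega), mul_sum]
  refine sum_congr rfl fun k hk ↦ ?_
  have hsign : (-1 : ZMod p) ^ (n - k) = (-1) ^ n * (-1) ^ k := by
    rw [← pow_add]
    exact neg_one_pow_congr (by rw [Nat.even_add, Nat.even_sub (mem_range_succ_iff.1 hk)])
  rw [hsign]
  ring
end

section
/- For any prime p > 3 and 0 ≤ n ≤ p-1, the numbers b_n = ∑_{k=0}^n C(n,k)^2 C(2k,k) satisfy b_n ≡ (-3 | p) · 9^n · b_{p-1-n} (mod p), where (-3 | p) is the Legendre symbol. -/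
/-!
The sequence satisfies the recurrence
`(n+2)² b(n+2) + 9 (n+1)² b(n) = (10(n+1)² + 10(n+1) + 3) b(n+1)`, proved by a WZ certificate.
Modulo `p`, the substitution `n ↦ p - 1 - n` (that is, `n ↦ -1 - n`) maps this recurrence to
itself up to a factor `9` per step, so `c n = (-3 | p) 9ⁿ b(p-1-n)` satisfies it as well for
`n ≤ p - 1`; there the leading coefficient `(n+2)²` is invertible, so `b` and `c` agree once they
agree at `0` and `1`. From `C(p-1,k) ≡ (-1)ᵏ` and `C(2k,k) ≡ (-4)ᵏ C((p-1)/2,k)` we get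
`b(p-1) ≡ (1 - 4)^((p-1)/2) ≡ (-3 | p)`, and the recurrence at `n = p - 2` gives
`9 b(p-2) ≡ 3 b(p-1)`.
-/

/-- The numbers `b n = ∑_{k=0}^n C(n,k)^2 C(2k,k)`. -/
def bSeq (n : ℕ) : ℕ := ∑ k ∈ Finset.range (n + 1), (n.choose k) ^ 2 * ((2 * k).choose k)

open Finset

theorem cast_choose_succ_mul {R : Type*} [CommRing R] (n k : ℕ) :
    (n.choose (k + 1) : R) * (k + 1) = n.choose k * (n - k) := by
  rcases le_or_gt k n with h | h
  · rw [← Nat.cast_sub h]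
    exact_mod_cast congrArg (Nat.cast : ℕ → R) (Nat.choose_succ_right_eq n k)
  · simp [Nat.choose_eq_zero_of_lt h, Nat.choose_eq_zero_of_lt (h.trans (Nat.lt_succ_self k))]

def bTerm (n k : ℕ) : ℕ := n.choose k ^ 2 * (2 * k).choose k

/-- Zeilberger's certificate for the recurrence of `bSeq`. -/
def bCert (m k : ℕ) : ℚ :=
  -((k : ℚ) * (4 * m + 4 - 3 * k) * (m.choose (k - 1) : ℚ) ^ 2 * ((2 * k).choose k : ℚ))

theorem bCert_succ_sub_bCert (n k : ℕ) :
    bCert (n + 1) (k + 1) - bCert (n + 1) k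
      = ((n : ℚ) + 2) ^ 2 * bTerm (n + 2) k + 9 * ((n : ℚ) + 1) ^ 2 * bTerm n k
        - (10 * ((n : ℚ) + 1) ^ 2 + 10 * ((n : ℚ) + 1) + 3) * bTerm (n + 1) k := by
  rcases k with _ | j
  · simp only [bTerm, bCert, Nat.choose_zero_right, Nat.choose_self, Nat.choose_succ_self_right,
      tsub_self, zero_tsub]
    push_cast
    ring
  · have hn2 : ((n + 2).choose (j + 1) : ℚ) = (n + 2) / (j + 1) * (n + 1).choose j := by
      rw [div_mul_eq_mul_div, eq_div_iff (by positivity)]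
      exact_mod_cast (Nat.add_one_mul_choose_eq (n + 1) j).symm
    have hn1 : ((n + 1).choose (j + 1) : ℚ) = (n + 1 - j) / (j + 1) * (n + 1).choose j := by
      rw [div_mul_eq_mul_div, eq_div_iff (by positivity), cast_choose_succ_mul]
      push_cast
      ring
    have hn0 : (n.choose (j + 1) : ℚ) = (n - j) / (n + 1) * (n + 1).choose (j + 1) := by
      rw [div_mul_eq_mul_div, eq_div_iff (by positivity)]
      have := cast_choose_succ_mul (R := ℚ) n j
      have hpascal : ((n + 1).choose (j + 1) : ℚ) = n.choose j + n.choose (j + 1) := by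
        exact_mod_cast Nat.choose_succ_succ n j
      rw [hpascal]
      linear_combination this
    have hcentral : ((2 * (j + 1 + 1)).choose (j + 1 + 1) : ℚ)
        = 2 * (2 * j + 3) / (j + 2) * (2 * (j + 1)).choose (j + 1) := by
      rw [div_mul_eq_mul_div, eq_div_iff (by positivity)]
      have := Nat.succ_mul_centralBinom_succ (j + 1)
      simp only [Nat.centralBinom] at this
      push_cast [mul_comm _ ((j : ℚ) + 2)]
      exact_mod_cast this
    simp only [bTerm, bCert, Nat.add_sub_cancel]
    push_cast
    rw [hn2, hn0, hn1, hcentral]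
    field_simp
    ring

theorem bSeq_eq_sum_range {n N : ℕ} (h : n < N) : bSeq n = ∑ k ∈ range N, bTerm n k := by
  refine sum_subset (range_subset_range.2 h) fun k _ hk ↦ ?_
  simp [Nat.choose_eq_zero_of_lt (not_lt.1 (mem_range.not.1 hk))]

theorem bSeq_recurrence (n : ℕ) :
    (n + 2) ^ 2 * bSeq (n + 2) + 9 * (n + 1) ^ 2 * bSeq n
      = (10 * (n + 1) ^ 2 + 10 * (n + 1) + 3) * bSeq (n + 1) := by
  have htelescope := sum_range_sub (bCert (n + 1)) (n + 3)
  rw [sum_congr rfl fun k _ ↦ bCert_succ_sub_bCert n k, sum_sub_distrib, sum_add_distrib,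
    ← mul_sum, ← mul_sum, ← mul_sum] at htelescope
  rw [bSeq_eq_sum_range (N := n + 3) (by omega), bSeq_eq_sum_range (n := n) (N := n + 3) (by omega),
    bSeq_eq_sum_range (n := n + 1) (N := n + 3) (by omega)]
  have hG : bCert (n + 1) (n + 3) - bCert (n + 1) 0 = 0 := by
    simp [bCert]
  qify
  linarith

section Recurrence

variable {R : Type*} [CommRing R]

/-- The recurrence of `bSeq`, shifted by one so that no truncated `n - 1` occurs. -/
def SatisfiesBRec (u : ℕ → R) (n : ℕ) : Prop :=
  ((n : R) + 2) ^ 2 * u (n + 2) + 9 * ((n : R) + 1) ^ 2 * u n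
    = (10 * ((n : R) + 1) ^ 2 + 10 * ((n : R) + 1) + 3) * u (n + 1)

theorem satisfiesBRec_bSeq (n : ℕ) : SatisfiesBRec (fun m ↦ (bSeq m : R)) n := by
  have := congrArg (Nat.cast : ℕ → R) (bSeq_recurrence n)
  push_cast at this
  exact this

/-- In `R`, `N - m = -1 - m`, and `m ↦ -1 - m` exchanges the coefficients `(m+1)²` and
`(m+2)²` of the recurrence while fixing the middle one. -/
theorem SatisfiesBRec.reflect {u : ℕ → R} {N n : ℕ} (hN : ((N + 1 : ℕ) : R) = 0)
    (hu : ∀ m, m + 2 ≤ N → SatisfiesBRec u m) (c : R) (hn : n + 2 ≤ N) :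
    SatisfiesBRec (fun m ↦ c * 9 ^ m * u (N - m)) n := by
  obtain ⟨m, rfl⟩ := Nat.exists_eq_add_of_le hn
  have hm : (m : R) = -(n + 3) := by
    push_cast at hN
    linear_combination hN
  have hum := hu m (by omega)
  simp only [SatisfiesBRec, hm] at hum ⊢
  rw [show n + 2 + m - n = m + 2 by omega, show n + 2 + m - (n + 1) = m + 1 by omega,
    show n + 2 + m - (n + 2) = m by omega]
  linear_combination c * 9 ^ (n + 1) * hum

theorem SatisfiesBRec.eq_of_le [IsDomain R] {u v : ℕ → R} {N : ℕ}
    (hu : ∀ n, n + 2 ≤ N → SatisfiesBRec u n) (hv : ∀ n, n + 2 ≤ N → SatisfiesBRec v n)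
    (hN : ∀ n, n + 2 ≤ N → (n : R) + 2 ≠ 0) (h0 : u 0 = v 0) (h1 : u 1 = v 1) :
    ∀ n ≤ N, u n = v n := by
  intro n
  induction n using Nat.strong_induction_on with
  | _ n ih =>
    intro hn
    match n with
    | 0 => exact h0
    | 1 => exact h1
    | n + 2 =>
      have e0 := ih n (by omega) (by omega)
      have e1 := ih (n + 1) (by omega) (by omega)
      have hun := hu n hn
      have hvn := hv n hn
      unfold SatisfiesBRec at hun hvn
      refine mul_left_cancel₀ (pow_ne_zero 2 (hN n hn)) ?_
      linear_combination hun - hvn + (10 * ((n : R) + 1) ^ 2 + 10 * ((n : R) + 1) + 3) * e1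
        - 9 * ((n : R) + 1) ^ 2 * e0

end Recurrence

section ModP

variable {p : ℕ} [Fact p.Prime]

theorem natCast_ne_zero_of_pos_of_lt {m : ℕ} (h0 : 0 < m) (hm : m < p) : (m : ZMod p) ≠ 0 :=
  (ZMod.natCast_eq_zero_iff m p).not.2 (Nat.not_dvd_of_pos_of_lt h0 hm)

theorem cast_choose_pred_prime {k : ℕ} (hk : k < p) : ((p - 1).choose k : ZMod p) = (-1) ^ k := by
  have h := ZMod.cast_descFactorial (n := k) (p := p) hk.le
  rw [Nat.descFactorial_eq_factorial_mul_choose, Nat.cast_mul, mul_comm ((-1) ^ k : ZMod p)] at h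
  refine mul_left_cancel₀ ?_ h
  exact (ZMod.natCast_eq_zero_iff _ p).not.2 fun hp ↦
    (Nat.Prime.dvd_factorial Fact.out).1 hp |>.not_gt hk

theorem cast_centralBinom (hp : p ≠ 2) {k : ℕ} (hk : k < p) :
    ((2 * k).choose k : ZMod p) = (-4) ^ k * (p / 2).choose k := by
  induction k with
  | zero => simp
  | succ k ih =>
    have hhalf : 2 * ((p / 2 : ℕ) : ZMod p) + 1 = 0 := by
      have hodd := Nat.two_mul_div_two_add_one_of_odd ((Fact.out : p.Prime).odd_of_ne_two hp)
      exact_mod_cast (congrArg (Nat.cast : ℕ → ZMod p) hodd).trans (ZMod.natCast_self p)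
    have hcentral := congrArg (Nat.cast : ℕ → ZMod p) (Nat.succ_mul_centralBinom_succ k)
    simp only [Nat.centralBinom] at hcentral
    push_cast at hcentral
    have hhalf_choose := cast_choose_succ_mul (R := ZMod p) (p / 2) k
    refine mul_left_cancel₀ (natCast_ne_zero_of_pos_of_lt (Nat.succ_pos k) hk) ?_
    push_cast
    linear_combination hcentral + 2 * (2 * (k : ZMod p) + 1) * ih (by omega)
      - (-4) ^ (k + 1) * hhalf_choose + 2 * (-4) ^ k * ((p / 2).choose k : ZMod p) * hhalf

theorem cast_bSeq_pred_prime (hp : p ≠ 2) : (bSeq (p - 1) : ZMod p) = (-3) ^ (p / 2) := by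
  have hp0 : 0 < p := (Fact.out : p.Prime).pos
  have hhalf : p / 2 < p := Nat.div_lt_self hp0 one_lt_two
  rw [bSeq_eq_sum_range (Nat.sub_lt hp0 one_pos), Nat.cast_sum]
  calc ∑ k ∈ range p, (bTerm (p - 1) k : ZMod p)
      = ∑ k ∈ range p, ((p / 2).choose k : ZMod p) * (-4) ^ k := by
        refine sum_congr rfl fun k hk ↦ ?_
        have hk := mem_range.1 hk
        rw [bTerm, Nat.cast_mul, Nat.cast_pow, cast_choose_pred_prime hk,
          cast_centralBinom hp hk, ← pow_mul, pow_mul', neg_one_sq, one_pow, one_mul, mul_comm]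
    _ = ∑ k ∈ range (p / 2 + 1), ((p / 2).choose k : ZMod p) * (-4) ^ k := by
        refine (sum_subset (range_subset_range.2 hhalf) fun k _ hk ↦ ?_).symm
        simp [Nat.choose_eq_zero_of_lt (not_lt.1 (mem_range.not.1 hk))]
    _ = (-4 + 1) ^ (p / 2) := by
        rw [add_pow]
        exact sum_congr rfl fun k _ ↦ by ring
    _ = (-3) ^ (p / 2) := by norm_num

theorem legendreSym_neg_three_mul_cast_bSeq_pred (hp3 : 3 < p) :
    (legendreSym p (-3) : ZMod p) * bSeq (p - 1) = 1 := by
  have hp2 : p ≠ 2 := by omega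
  have h3 : (-3 : ZMod p) ≠ 0 :=
    neg_ne_zero.2 (by exact_mod_cast natCast_ne_zero_of_pos_of_lt (m := 3) three_pos hp3)
  rw [legendreSym.eq_pow, cast_bSeq_pred_prime hp2, Int.cast_neg, Int.cast_ofNat, ← pow_add,
    ← two_mul, Nat.two_mul_odd_div_two (Nat.odd_iff.1 ((Fact.out : p.Prime).odd_of_ne_two hp2))]
  exact ZMod.pow_card_sub_one_eq_one h3

theorem nine_mul_cast_bSeq_sub_two : 9 * (bSeq (p - 2) : ZMod p) = 3 * bSeq (p - 1) := by
  have hp2 := (Fact.out : p.Prime).two_le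
  have hrec := satisfiesBRec_bSeq (R := ZMod p) (p - 2)
  have hx : ((p - 2 : ℕ) : ZMod p) = -2 := by
    rw [Nat.cast_sub hp2, ZMod.natCast_self]
    ring
  simp only [SatisfiesBRec, hx, show p - 2 + 1 = p - 1 by omega] at hrec
  norm_num at hrec
  exact hrec

end ModP

/-- For a prime `p > 3` and `0 ≤ n ≤ p-1`,
`b n ≡ (-3 | p) ⬝ 9^n ⬝ b (p-1-n) (mod p)`, with `(-3 | p)` the Legendre symbol. -/
theorem bSeq_symmetry (p : ℕ) [Fact p.Prime] (hp3 : 3 < p) :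
    ∀ n : ℕ, n ≤ p - 1 →
      (bSeq n : ℤ) ≡ legendreSym p (-3) * 9 ^ n * (bSeq (p - 1 - n) : ℤ) [ZMOD p] := by
  intro n hn
  rw [← ZMod.intCast_eq_intCast_iff]
  push_cast
  set χ : ZMod p := (legendreSym p (-3) : ZMod p)
  have hχ : χ * bSeq (p - 1) = 1 := legendreSym_neg_three_mul_cast_bSeq_pred hp3
  have hN : ((p - 1 + 1 : ℕ) : ZMod p) = 0 := by
    rw [Nat.sub_add_cancel (by omega)]
    exact ZMod.natCast_self p
  refine SatisfiesBRec.eq_of_le (u := fun m ↦ (bSeq m : ZMod p))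
    (v := fun m ↦ χ * 9 ^ m * (bSeq (p - 1 - m) : ZMod p))
    (fun m _ ↦ satisfiesBRec_bSeq m)
    (fun m hm ↦ SatisfiesBRec.reflect hN (fun k _ ↦ satisfiesBRec_bSeq k) χ hm)
    (fun m hm ↦ by exact_mod_cast natCast_ne_zero_of_pos_of_lt (m := m + 2) (by omega) (by omega))
    ?_ ?_ n hn
  · rw [show bSeq 0 = 1 from rfl, Nat.sub_zero, pow_zero, mul_one, Nat.cast_one, hχ]
  · rw [show bSeq 1 = 3 from rfl, show p - 1 - 1 = p - 2 by omega, pow_one, mul_assoc,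
      nine_mul_cast_bSeq_sub_two]
    linear_combination -3 * hχ
end

section
/- Let p be an odd prime and define c_n = ∑_{d | n, d ≡ 1 (mod 4)} d^2 - ∑_{d | n, d ≡ 3 (mod 4)} d^2. Then for all positive integers m and r ≥ 1, c_{m p^r} ≡ c_{m p^{r-1}} (mod p^r). -/
/-!
Writing `c n = ∑_{d ∣ n} χ₄(d) d²`, the difference `c (m p^r) - c (m p^(r-1))` is the sum over the
divisors of `m p^r` that do not divide `m p^(r-1)`. Every such divisor is a multiple of `p^r`, and
so is its term `χ₄(d) d²`.
-/

/-- `c n = ∑_{d ∣ n, d ≡ 1 (4)} d^2 - ∑_{d ∣ n, d ≡ 3 (4)} d^2`. -/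
def cSeq (n : ℕ) : ℤ :=
  ∑ d ∈ n.divisors.filter (fun d => d % 4 = 1), (d : ℤ) ^ 2
    - ∑ d ∈ n.divisors.filter (fun d => d % 4 = 3), (d : ℤ) ^ 2

open Finset

theorem cSeq_eq_sum_divisors (n : ℕ) :
    cSeq n = ∑ d ∈ n.divisors, ZMod.χ₄ d * (d : ℤ) ^ 2 := by
  rw [cSeq, sum_filter, sum_filter, ← sum_sub_distrib]
  refine sum_congr rfl fun d _ => ?_
  rw [ZMod.χ₄_nat_eq_if_mod_four]
  split_ifs <;> omega

theorem Nat.Prime.pow_succ_dvd_of_dvd_mul_pow_succ {p m k d : ℕ} (hp : p.Prime)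
    (h : d ∣ m * p ^ (k + 1)) (h' : ¬d ∣ m * p ^ k) : p ^ (k + 1) ∣ d := by
  obtain ⟨a, b, ha, hb, rfl⟩ := Nat.dvd_mul.mp h
  obtain ⟨j, hj, rfl⟩ := (Nat.dvd_prime_pow hp).mp hb
  rcases hj.eq_or_lt with rfl | hj
  · exact dvd_mul_left _ _
  · exact absurd (mul_dvd_mul ha (pow_dvd_pow p (Nat.le_of_lt_succ hj))) h'

theorem sum_divisors_mul_pow_succ_modEq {p : ℕ} (hp : p.Prime) {f : ℕ → ℤ}
    (hf : ∀ d : ℕ, (d : ℤ) ∣ f d) (m k : ℕ) :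
    ∑ d ∈ (m * p ^ (k + 1)).divisors, f d ≡ ∑ d ∈ (m * p ^ k).divisors, f d
      [ZMOD (p : ℤ) ^ (k + 1)] := by
  rcases eq_or_ne m 0 with rfl | hm
  · simp
  have hp0 := hp.ne_zero
  have hsub : (m * p ^ k).divisors ⊆ (m * p ^ (k + 1)).divisors :=
    Nat.divisors_subset_of_dvd (by positivity) (mul_dvd_mul_left m (pow_dvd_pow p k.le_succ))
  have hnew : (p : ℤ) ^ (k + 1) ∣ ∑ d ∈ (m * p ^ (k + 1)).divisors \ (m * p ^ k).divisors, f d := by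
    refine dvd_sum fun d hd => ?_
    obtain ⟨hdA, hdB⟩ := mem_sdiff.mp hd
    have hpd : p ^ (k + 1) ∣ d := hp.pow_succ_dvd_of_dvd_mul_pow_succ
      (Nat.dvd_of_mem_divisors hdA) fun h => hdB (Nat.mem_divisors.mpr ⟨h, by positivity⟩)
    exact (by exact_mod_cast hpd : (p : ℤ) ^ (k + 1) ∣ d).trans (hf d)
  rw [← sum_sdiff hsub]
  exact ((Int.modEq_zero_iff_dvd.mpr hnew).add_right _).trans (by rw [zero_add])

theorem cSeq_supercongruence_general (p : ℕ) (hp : p.Prime)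
    (m r : ℕ) :
    cSeq (m * p ^ r) ≡ cSeq (m * p ^ (r - 1)) [ZMOD (p : ℤ) ^ r] := by
  cases r with
  | zero => simp
  | succ k =>
    simp only [cSeq_eq_sum_divisors, Nat.add_sub_cancel]
    exact sum_divisors_mul_pow_succ_modEq hp (fun d => ⟨ZMod.χ₄ d * d, by ring⟩) m k

/-- For an odd prime `p`, `m ≥ 1` and `r ≥ 1`,
`c (m p^r) ≡ c (m p^(r-1)) (mod p^r)`. -/
theorem cSeq_supercongruence (p : ℕ) (hp : p.Prime) (hodd : Odd p)
    (m r : ℕ) (hm : 0 < m) (hr : 1 ≤ r) :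
    cSeq (m * p ^ r) ≡ cSeq (m * p ^ (r - 1)) [ZMOD (p : ℤ) ^ r] :=
  cSeq_supercongruence_general p hp m r
end

section
/- Let p be a prime and n, m nonnegative integers with m ≤ n. Then the p-adic valuation of the binomial coefficient C(n, m) equals the number of carries when adding m and n - m in base p. -/
open Finset

theorem Finset.card_filter_Ico_one_add_one (P : ℕ → Prop) [DecidablePred P] (b : ℕ) :
    #{i ∈ Ico 1 (b + 1) | P i} = #{j ∈ range b | P (j + 1)} := by
  have hshift : Ico 1 (b + 1) = (range b).map (addRightEmbedding 1) := by
    rw [range_eq_Ico, map_add_right_Ico, zero_add]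
  rw [hshift, filter_map, card_map]
  rfl

/-- Kummer's theorem: for a prime `p` and `m ≤ n`, the `p`-adic valuation of
`C(n, m)` equals the number of carries when adding `m` and `n - m` in base `p`
(there is a carry out of position `j` iff `m % p^(j+1) + (n-m) % p^(j+1) ≥ p^(j+1)`). -/
theorem kummer_carries (p : ℕ) (hp : p.Prime) (n m : ℕ) (h : m ≤ n) :
    padicValNat p (n.choose m) =
      ((Finset.range (n + 1)).filter
        (fun j => p ^ (j + 1) ≤ m % p ^ (j + 1) + (n - m) % p ^ (j + 1))).card := by
  have : Fact p.Prime := ⟨hp⟩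
  have hlog : Nat.log p n < n + 1 + 1 := (Nat.log_le_self p n).trans_lt (by omega)
  rw [padicValNat_choose h hlog, card_filter_Ico_one_add_one]
end

section
/- Let p be an odd prime, and let i, n be positive integers with p not dividing i and 2i ≤ n. Then v_p( C(2(n-i), n-i)^2 · C(n-i, i) ) ≥ v_p(n), where v_p denotes the p-adic valuation. -/
/-!
Write `m = n - i`, so `n = m + i`. Since `i * C(n, i) = n * C(n - 1, i - 1)` and `p ∤ i`, the full
power of `p` in `n` divides `C(n, i) = C(m + i, i)`. The identity
`C(2m, m + i) * C(m + i, m) = C(2m, m) * C(m, i)` shows that `C(m + i, i)` divides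
`C(2m, m) * C(m, i)`, hence also `C(2m, m)^2 * C(m, i)`.
-/

theorem Nat.Coprime.dvd_choose_of_dvd {d n i : ℕ} (hi : Nat.Coprime d i) (hd : d ∣ n) :
    d ∣ n.choose i := by
  rcases i with _ | i
  · simp [(Nat.coprime_zero_right d).1 hi]
  rcases n with _ | n
  · simp
  refine hi.dvd_of_dvd_mul_right ?_
  rw [← Nat.add_one_mul_choose_eq]
  exact dvd_mul_of_dvd_left hd _

theorem Nat.add_choose_dvd_two_mul_choose_mul_choose (m i : ℕ) :
    (m + i).choose i ∣ (2 * m).choose m * m.choose i := by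
  have key := Nat.choose_mul (n := 2 * m) (k := m + i) (s := m) (Nat.le_add_right m i)
  rw [show 2 * m - m = m by omega, Nat.add_sub_cancel_left, Nat.choose_symm_add] at key
  exact Dvd.intro_left _ key

theorem valuation_g_ge_general (p : ℕ) (hp : p.Prime)
    (i n : ℕ) (hpi : ¬ p ∣ i) (h2i : 2 * i ≤ n) :
    padicValNat p n ≤
      padicValNat p (((2 * (n - i)).choose (n - i)) ^ 2 * ((n - i).choose i)) := by
  have : Fact p.Prime := ⟨hp⟩
  set m := n - i
  have hn : n = m + i := by omega
  have hm : i ≤ m := by omega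
  have hpow : p ^ padicValNat p n ∣ n.choose i :=
    ((hp.coprime_iff_not_dvd.2 hpi).pow_left _).dvd_choose_of_dvd pow_padicValNat_dvd
  have hne : (2 * m).choose m ^ 2 * m.choose i ≠ 0 :=
    mul_ne_zero (pow_ne_zero _ (Nat.choose_pos (by omega)).ne') (Nat.choose_pos hm).ne'
  rw [← padicValNat_dvd_iff_le hne]
  refine hpow.trans ?_
  rw [hn, sq, mul_assoc]
  exact (Nat.add_choose_dvd_two_mul_choose_mul_choose m i).trans (dvd_mul_left _ _)

/-- For an odd prime `p` and positive integers `i`, `n` with `p ∤ i` and `2i ≤ n`,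
`v_p(C(2(n-i), n-i)^2 ⬝ C(n-i, i)) ≥ v_p(n)`. -/
theorem valuation_g_ge (p : ℕ) (hp : p.Prime) (hodd : Odd p)
    (i n : ℕ) (hi : 0 < i) (hn : 0 < n) (hpi : ¬ p ∣ i) (h2i : 2 * i ≤ n) :
    padicValNat p n ≤
      padicValNat p (((2 * (n - i)).choose (n - i)) ^ 2 * ((n - i).choose i)) :=
  valuation_g_ge_general p hp i n hpi h2i
end

section
/- Let p be an odd prime, q ≥ 1, and m, k, r, s integers with r ≥ s ≥ q and kp^s ≤ mp^r. Let e_0 = v_p(C(m p^r, k p^s)). Then C(m p^r, k p^s)/p^{e_0} ≡ C(m p^{r-1}, k p^{s-1})/p^{e_0} (mod p^q), and in particular both binomial coefficients have the same p-adic valuation e_0. -/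
/-!
Let `F(n)` be the product of the integers in `[1, n]` prime to `p`, so that
`n! = F(n) · p^⌊n/p⌋ · ⌊n/p⌋!`. Comparing these expansions for `C(Np, Kp)` and `C(N, K)` gives
`C(Np, Kp) · F(Kp) F((N-K)p) = C(N, K) · F(Np)`, where every `F`-value is prime to `p`; so the two
binomial coefficients have the same `p`-adic valuation. If `p^q ∣ (N-K)p`, the factors of `F(Np)`
beyond `(N-K)p` agree mod `p^q` with those of `F(Kp)`, whence `F(Np) ≡ F(Kp) F((N-K)p) (mod p^q)`,
and cancelling these units yields the congruence.
-/

namespace Nat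

def primeFreeFactorial (p n : ℕ) : ℕ := ∏ i ∈ Finset.range n, if p ∣ i + 1 then 1 else i + 1

theorem factorial_eq_primeFreeFactorial_mul (p n : ℕ) :
    n ! = primeFreeFactorial p n * p ^ (n / p) * (n / p)! := by
  induction n with
  | zero => simp [primeFreeFactorial]
  | succ n ih =>
    have hdiv := Nat.mul_div_cancel' (n := p) (m := n + 1)
    rw [primeFreeFactorial, Finset.prod_range_succ, ← primeFreeFactorial, factorial_succ, ih,
      Nat.succ_div]
    split_ifs with h
    · have hn : p * (n / p + 1) = n + 1 := by rw [← hdiv h, Nat.succ_div, if_pos h]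
      rw [← hn, factorial_succ, pow_succ]
      ring
    · rw [add_zero]
      ring

variable {p : ℕ}

theorem coprime_primeFreeFactorial (hp : p.Prime) (n : ℕ) : Coprime p (primeFreeFactorial p n) :=
  Coprime.prod_right fun i _ => by
    split_ifs with h
    · exact coprime_one_right p
    · exact (Prime.coprime_iff_not_dvd hp).mpr h

theorem primeFreeFactorial_add_modEq {d A : ℕ} (hpA : p ∣ A) (hdA : d ∣ A) (K : ℕ) :
    primeFreeFactorial p (A + K) ≡ primeFreeFactorial p A * primeFreeFactorial p K [MOD d] := by
  rw [primeFreeFactorial, Finset.prod_range_add, ← primeFreeFactorial]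
  refine ModEq.mul_left _ ?_
  rw [← ZMod.natCast_eq_natCast_iff, primeFreeFactorial, cast_prod, cast_prod]
  refine Finset.prod_congr rfl fun i _ => ?_
  have hiff : p ∣ A + i + 1 ↔ p ∣ i + 1 := by rw [add_assoc]; exact Nat.dvd_add_right hpA
  have hA : (A : ZMod d) = 0 := (ZMod.natCast_eq_zero_iff A d).mpr hdA
  simp only [hiff]
  split_ifs
  · rfl
  · push_cast; rw [hA, zero_add]

theorem choose_mul_mul_primeFreeFactorial (hp : 0 < p) {N K : ℕ} (hKN : K ≤ N) :
    (N * p).choose (K * p) * (primeFreeFactorial p (K * p) * primeFreeFactorial p ((N - K) * p)) =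
      N.choose K * primeFreeFactorial p (N * p) := by
  have hfac (n : ℕ) : (n * p)! = primeFreeFactorial p (n * p) * p ^ n * n ! := by
    rw [factorial_eq_primeFreeFactorial_mul p, Nat.mul_div_cancel _ hp]
  refine Nat.eq_of_mul_eq_mul_right (show 0 < p ^ N * (K ! * (N - K)!) by positivity) ?_
  have hpow : p ^ N = p ^ K * p ^ (N - K) := by rw [← pow_add, Nat.add_sub_cancel' hKN]
  calc _ = (N * p).choose (K * p) * (K * p)! * (N * p - K * p)! := by
          rw [← Nat.sub_mul, hfac, hfac, hpow]; ring
    _ = primeFreeFactorial p (N * p) * p ^ N * (N.choose K * K ! * (N - K)!) := by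
          rw [choose_mul_factorial_mul_factorial (Nat.mul_le_mul_right p hKN), hfac,
            choose_mul_factorial_mul_factorial hKN]
    _ = _ := by ring

theorem padicValNat_choose_mul (hp : p.Prime) {N K : ℕ} (hKN : K ≤ N) :
    padicValNat p ((N * p).choose (K * p)) = padicValNat p (N.choose K) := by
  have := Fact.mk hp
  have hF (n : ℕ) : padicValNat p (primeFreeFactorial p n) = 0 :=
    padicValNat.eq_zero_of_not_dvd ((Prime.coprime_iff_not_dvd hp).mp
      (coprime_primeFreeFactorial hp n))
  have hF0 (n : ℕ) : primeFreeFactorial p n ≠ 0 := fun h0 =>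
    hp.one_lt.ne' (by simpa [h0] using coprime_primeFreeFactorial hp n)
  have h := congrArg (padicValNat p) (choose_mul_mul_primeFreeFactorial hp.pos hKN)
  rwa [padicValNat.mul (choose_pos (Nat.mul_le_mul_right p hKN)).ne' (mul_ne_zero (hF0 _) (hF0 _)),
    padicValNat.mul (hF0 _) (hF0 _), padicValNat.mul (choose_pos hKN).ne' (hF0 _), hF, hF, hF,
    add_zero, add_zero, add_zero] at h

theorem ModEq.of_mul_eq_mul {a b u w d : ℕ} (h : a * u = b * w) (hd : Coprime d u)
    (huw : u ≡ w [MOD d]) : a ≡ b [MOD d] :=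
  ModEq.cancel_right_of_coprime hd (h ▸ huw.symm.mul_left b)

theorem div_modEq_div_of_mul_eq_mul {a b u w d g : ℕ} (h : a * u = b * w) (hga : g ∣ a)
    (hgb : g ∣ b) (hd : Coprime d u) (huw : u ≡ w [MOD d]) : a / g ≡ b / g [MOD d] := by
  rcases eq_or_ne g 0 with rfl | hg
  · simp [ModEq.refl]
  refine ModEq.of_mul_eq_mul (Nat.eq_of_mul_eq_mul_right (Nat.pos_of_ne_zero hg) ?_) hd huw
  calc a / g * u * g = a / g * g * u := by ring
    _ = b / g * g * w := by rw [Nat.div_mul_cancel hga, Nat.div_mul_cancel hgb, h]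
    _ = b / g * w * g := by ring

end Nat

open Nat

theorem granville_congruence_general (p : ℕ) (hp : p.Prime)
    (q m k r s : ℕ) (hq : 1 ≤ q) (hsq : q ≤ s) (hrs : s ≤ r)
    (hle : k * p ^ s ≤ m * p ^ r) :
    padicValNat p ((m * p ^ (r - 1)).choose (k * p ^ (s - 1))) =
        padicValNat p ((m * p ^ r).choose (k * p ^ s)) ∧
      (m * p ^ r).choose (k * p ^ s) / p ^ padicValNat p ((m * p ^ r).choose (k * p ^ s))
        ≡ (m * p ^ (r - 1)).choose (k * p ^ (s - 1))
            / p ^ padicValNat p ((m * p ^ r).choose (k * p ^ s)) [MOD p ^ q] := by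
  have hpred (a t : ℕ) (ht : 1 ≤ t) : a * p ^ t = a * p ^ (t - 1) * p := by
    rw [mul_assoc, ← pow_succ, Nat.sub_add_cancel ht]
  have hdvd (a t : ℕ) (ht : q ≤ t) : p ^ (q - 1) ∣ a * p ^ (t - 1) :=
    dvd_mul_of_dvd_right (pow_dvd_pow p (by omega)) a
  rw [hpred m r (by omega), hpred k s (by omega)] at hle ⊢
  set N := m * p ^ (r - 1)
  set K := k * p ^ (s - 1)
  have hKN : K ≤ N := Nat.le_of_mul_le_mul_right hle hp.pos
  refine ⟨(padicValNat_choose_mul hp hKN).symm, ?_⟩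
  refine div_modEq_div_of_mul_eq_mul (choose_mul_mul_primeFreeFactorial hp.pos hKN)
    pow_padicValNat_dvd (padicValNat_choose_mul hp hKN ▸ pow_padicValNat_dvd)
    ((coprime_primeFreeFactorial hp _).mul_right (coprime_primeFreeFactorial hp _) |>.pow_left q)
    ?_
  have hpq : p ^ q ∣ (N - K) * p := by
    rw [← Nat.sub_add_cancel hq, pow_succ]
    exact Nat.mul_dvd_mul_right (Nat.dvd_sub (hdvd m r (by omega)) (hdvd k s hsq)) p
  have hsplit := primeFreeFactorial_add_modEq (dvd_mul_left p _) hpq (K * p)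
  rw [← Nat.add_mul, Nat.sub_add_cancel hKN, mul_comm (primeFreeFactorial p _)] at hsplit
  exact hsplit.symm

/-- Ljunggren/Jacobsthal-type congruence: for an odd prime `p`, `q ≥ 1`,
`r ≥ s ≥ q` and `k p^s ≤ m p^r`, with `e₀ = v_p(C(m p^r, k p^s))`, we have
`C(m p^r, k p^s)/p^(e₀) ≡ C(m p^(r-1), k p^(s-1))/p^(e₀) (mod p^q)`,
and in particular both binomial coefficients have the same `p`-adic valuation. -/
theorem granville_congruence (p : ℕ) (hp : p.Prime) (hodd : Odd p)
    (q m k r s : ℕ) (hq : 1 ≤ q) (hsq : q ≤ s) (hrs : s ≤ r)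
    (hle : k * p ^ s ≤ m * p ^ r) :
    padicValNat p ((m * p ^ (r - 1)).choose (k * p ^ (s - 1))) =
        padicValNat p ((m * p ^ r).choose (k * p ^ s)) ∧
      (m * p ^ r).choose (k * p ^ s) / p ^ padicValNat p ((m * p ^ r).choose (k * p ^ s))
        ≡ (m * p ^ (r - 1)).choose (k * p ^ (s - 1))
            / p ^ padicValNat p ((m * p ^ r).choose (k * p ^ s)) [MOD p ^ q] :=
  granville_congruence_general p hp q m k r s hq hsq hrs hle
end
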